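/- arXiv:1808.01531 — 4 statements merged into one kernel-verified Lean document; each statement's English description precedes it below -/
import Mathlib

section
/- The map F_cc(w₂,a) = (8w₂a², 4a(a² - σ²)) on the half-plane {a > 0} satisfies: for v = (a² - σ², -2w₂a) (which is orthogonal to F_cc), v^T J_cc v = 8a²(a² - σ²)² + 16w₂²a²(a² + σ²) ≥ 0, where J_cc is the Jacobian of F_cc. -/
open Matrix

/-- For `F_cc(w₂,a) = (8w₂a², 4a(a² - σ²))` on `{a > 0}` and
`v = (a² - σ², -2w₂a)` (orthogonal to `F_cc`), one has
`vᵀ J_cc v = 8a²(a² - σ²)² + 16w₂²a²(a² + σ²) ≥ 0`,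
where `J_cc = [[8a², 16w₂a],[0, 4(3a² - σ²)]]` is the Jacobian of `F_cc`. -/
theorem stmt_12 (σ : ℝ) (hσ : 0 < σ) (w₂ a : ℝ) (ha : 0 < a) :
    ((![a ^ 2 - σ ^ 2, -2 * w₂ * a] : Fin 2 → ℝ) ⬝ᵥ
        (![8 * w₂ * a ^ 2, 4 * a * (a ^ 2 - σ ^ 2)] : Fin 2 → ℝ) = 0) ∧
    ((![a ^ 2 - σ ^ 2, -2 * w₂ * a] : Fin 2 → ℝ) ⬝ᵥ
        (!![8 * a ^ 2, 16 * w₂ * a; 0, 4 * (3 * a ^ 2 - σ ^ 2)] :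
          Matrix (Fin 2) (Fin 2) ℝ).mulVec ![a ^ 2 - σ ^ 2, -2 * w₂ * a]
      = 8 * a ^ 2 * (a ^ 2 - σ ^ 2) ^ 2 + 16 * w₂ ^ 2 * a ^ 2 * (a ^ 2 + σ ^ 2)) ∧
    (0 ≤ 8 * a ^ 2 * (a ^ 2 - σ ^ 2) ^ 2 + 16 * w₂ ^ 2 * a ^ 2 * (a ^ 2 + σ ^ 2)) := by
  refine ⟨?_, ?_, ?_⟩
  · simp [dotProduct, Fin.sum_univ_two]; ring
  · simp [dotProduct, mulVec, Fin.sum_univ_two]; ring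
  · positivity
end

section
/- The rescaled map F_cc'(w₂,a) = (w₂, (a² - σ²)/(2a)) on {a > 0} has a symmetric positive definite Jacobian with eigenvalues 1 and (1/2)(1 + σ²/a²); in particular it is (1/2)-strongly monotone on the convex domain {(w₂,a) : a > 0}. -/
open Matrix

/-- The rescaled map `F_cc'(w₂,a) = (w₂, (a² - σ²)/(2a))` on `{a > 0}` has a symmetric
positive definite Jacobian `[[1,0],[0,(a²+σ²)/(2a²)]]` with eigenvalues `1` and
`(1/2)(1 + σ²/a²)`; in particular `F_cc'` is `(1/2)`-strongly monotone on `{a > 0}`. -/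
theorem stmt_14 (σ : ℝ) (hσ : 0 < σ) :
    (∀ a : ℝ, 0 < a →
      ((!![1, 0; 0, (a ^ 2 + σ ^ 2) / (2 * a ^ 2)] : Matrix (Fin 2) (Fin 2) ℝ)ᵀ
        = !![1, 0; 0, (a ^ 2 + σ ^ 2) / (2 * a ^ 2)]) ∧
      ((!![1, 0; 0, (a ^ 2 + σ ^ 2) / (2 * a ^ 2)] : Matrix (Fin 2) (Fin 2) ℝ).mulVec ![1, 0]
        = (1 : ℝ) • ![1, 0]) ∧
      ((!![1, 0; 0, (a ^ 2 + σ ^ 2) / (2 * a ^ 2)] : Matrix (Fin 2) (Fin 2) ℝ).mulVec ![0, 1]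
        = ((1 / 2) * (1 + σ ^ 2 / a ^ 2)) • ![0, 1]) ∧
      (∀ v : Fin 2 → ℝ, v ≠ 0 →
        0 < v ⬝ᵥ (!![1, 0; 0, (a ^ 2 + σ ^ 2) / (2 * a ^ 2)] :
          Matrix (Fin 2) (Fin 2) ℝ).mulVec v)) ∧
    (∀ x x' : ℝ × ℝ, 0 < x.2 → 0 < x'.2 →
      (1 / 2) * ((x.1 - x'.1) ^ 2 + (x.2 - x'.2) ^ 2) ≤
        (x.1 - x'.1) * (x.1 - x'.1)
        + ((x.2 ^ 2 - σ ^ 2) / (2 * x.2) - (x'.2 ^ 2 - σ ^ 2) / (2 * x'.2)) * (x.2 - x'.2)) := by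
  constructor
  · intro a ha
    have ha2 : (0:ℝ) < a ^ 2 := by positivity
    refine ⟨?_, ?_, ?_, ?_⟩
    · ext i j; fin_cases i <;> fin_cases j <;> simp [Matrix.transpose]
    · funext i; fin_cases i <;> simp [Matrix.mulVec, dotProduct, Fin.sum_univ_two]
    · funext i; fin_cases i <;>
        simp [Matrix.mulVec, dotProduct, Fin.sum_univ_two] <;> field_simp <;> ring
    · intro v hv
      have h : v ⬝ᵥ (!![1, 0; 0, (a ^ 2 + σ ^ 2) / (2 * a ^ 2)] :
          Matrix (Fin 2) (Fin 2) ℝ).mulVec v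
          = v 0 ^ 2 + (a ^ 2 + σ ^ 2) / (2 * a ^ 2) * v 1 ^ 2 := by
        simp [Matrix.mulVec, dotProduct, Fin.sum_univ_two]; ring
      rw [h]
      rcases (by
        by_contra h'
        push_neg at h'
        exact hv (funext fun i => by fin_cases i <;> simp [h'.1, h'.2]) :
        v 0 ≠ 0 ∨ v 1 ≠ 0) with h0 | h1
      · have : (0:ℝ) < v 0 ^ 2 := by positivity
        have h2 : (0:ℝ) ≤ (a ^ 2 + σ ^ 2) / (2 * a ^ 2) * v 1 ^ 2 := by positivity
        linarith
      · have : (0:ℝ) < (a ^ 2 + σ ^ 2) / (2 * a ^ 2) * v 1 ^ 2 := by positivity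
        have h2 : (0:ℝ) ≤ v 0 ^ 2 := by positivity
        linarith
  · rintro ⟨x1, x2⟩ ⟨y1, y2⟩ hx hy
    simp only
    have key : (x2 ^ 2 - σ ^ 2) / (2 * x2) - (y2 ^ 2 - σ ^ 2) / (2 * y2)
        = (x2 - y2) * (1 / 2 + σ ^ 2 / (2 * x2 * y2)) := by
      field_simp
      ring
    rw [key]
    have h1 : (1/2 : ℝ) * (x1 - y1) ^ 2 ≤ (x1 - y1) * (x1 - y1) := by nlinarith [sq_nonneg (x1 - y1)]
    have h2 : (1/2 : ℝ) * (x2 - y2) ^ 2 ≤ (x2 - y2) * (1 / 2 + σ ^ 2 / (2 * x2 * y2)) * (x2 - y2) := by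
      have hpos : (0:ℝ) ≤ σ ^ 2 / (2 * x2 * y2) := by positivity
      nlinarith [sq_nonneg (x2 - y2)]
    linarith
end

section
/- If F(x) = Jx + b with J a normal real matrix (JJ^T = J^T J), then the map F_cc = (J^T - J)F is monotone: the symmetrized Jacobian (1/2)((J^T - J)J + J^T(J^T - J)^T) equals (1/2)(J - J^T)^T(J - J^T), which is positive semidefinite. -/
open Matrix

/-- If `F(x) = Jx + b` with `J` a normal real matrix, then `F_cc = (Jᵀ - J)F` is monotone:
its symmetrized Jacobian `(1/2)((Jᵀ-J)J + ((Jᵀ-J)J)ᵀ)` equals `(1/2)(J-Jᵀ)ᵀ(J-Jᵀ)`,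
which is positive semidefinite; hence the affine map `F_cc` is monotone. -/
theorem stmt_16 (n : ℕ) (J : Matrix (Fin n) (Fin n) ℝ) (hJ : J * Jᵀ = Jᵀ * J)
    (b : Fin n → ℝ) :
    (((1 : ℝ) / 2) • ((Jᵀ - J) * J + ((Jᵀ - J) * J)ᵀ)
      = ((1 : ℝ) / 2) • ((J - Jᵀ)ᵀ * (J - Jᵀ))) ∧
    (∀ v : Fin n → ℝ,
      0 ≤ v ⬝ᵥ (((1 : ℝ) / 2) • ((J - Jᵀ)ᵀ * (J - Jᵀ))).mulVec v) ∧
    (∀ x x' : Fin n → ℝ,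
      0 ≤ ((Jᵀ - J).mulVec (J.mulVec x + b) - (Jᵀ - J).mulVec (J.mulVec x' + b)) ⬝ᵥ (x - x')) := by
  have key : (Jᵀ - J) * J + ((Jᵀ - J) * J)ᵀ = (J - Jᵀ)ᵀ * (J - Jᵀ) := by
    simp only [transpose_mul, transpose_sub, transpose_transpose, sub_mul, mul_sub, hJ]
    abel
  have psd : ∀ v : Fin n → ℝ, 0 ≤ v ⬝ᵥ ((J - Jᵀ)ᵀ * (J - Jᵀ)).mulVec v := by
    intro v
    rw [← mulVec_mulVec, dotProduct_mulVec, vecMul_transpose]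
    exact Finset.sum_nonneg fun i _ => mul_self_nonneg _
  refine ⟨by rw [key], fun v => ?_, fun x x' => ?_⟩
  · rw [smul_mulVec, dotProduct_smul, smul_eq_mul]
    exact mul_nonneg (by norm_num) (psd v)
  · have h1 : (Jᵀ - J).mulVec (J.mulVec x + b) - (Jᵀ - J).mulVec (J.mulVec x' + b)
        = ((Jᵀ - J) * J).mulVec (x - x') := by
      simp only [mulVec_add, mulVec_sub, ← mulVec_mulVec]
      abel
    rw [h1]
    set M := (Jᵀ - J) * J with hM
    set v := x - x'
    have h2 : v ⬝ᵥ Mᵀ.mulVec v = M.mulVec v ⬝ᵥ v := by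
      rw [dotProduct_mulVec, vecMul_transpose]
    have h3 : 0 ≤ v ⬝ᵥ (M + Mᵀ).mulVec v := by rw [hM, key]; exact psd v
    rw [add_mulVec, dotProduct_add, h2, dotProduct_comm] at h3
    linarith
end

section
/- Let F(w₂,a) = (a² - σ², -2w₂a) on R² with σ > 0, and consider F_lin = (αI + βJ^T - γJ)F for constants α, β, γ, where J is the Jacobian of F. If F_lin is monotone on R² (i.e., its symmetrized Jacobian is everywhere positive semidefinite), then α = 0 and β + γ = 0 and β = 0; in particular no nontrivial linear combination αF + βJ^T F - γJF is monotone for the (w₂,a)-subsystem. -/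
/-- For the (w₂,a)-subsystem map `F(w₂,a) = (a² - σ², -2w₂a)` with `σ > 0`, if the
linear combination `F_lin = (αI + βJᵀ - γJ)F`, explicitly
`F_lin(w₂,a) = (α(a²-σ²) + 4(β+γ)w₂a², 2a(β+γ)(a²-σ²) + 4(β-γ)w₂²a - 2αw₂a)`,
is monotone on `R²`, then `α = 0`, `β + γ = 0` and `β = 0`: no nontrivial linear
combination is monotone. -/
theorem stmt_19 (σ α β γ : ℝ) (hσ : 0 < σ)
    (hmono : ∀ x x' : ℝ × ℝ,
      0 ≤ ((α * (x.2 ^ 2 - σ ^ 2) + 4 * (β + γ) * x.1 * x.2 ^ 2)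
            - (α * (x'.2 ^ 2 - σ ^ 2) + 4 * (β + γ) * x'.1 * x'.2 ^ 2)) * (x.1 - x'.1)
          + ((2 * x.2 * (β + γ) * (x.2 ^ 2 - σ ^ 2) + 4 * (β - γ) * x.1 ^ 2 * x.2
                - 2 * α * x.1 * x.2)
            - (2 * x'.2 * (β + γ) * (x'.2 ^ 2 - σ ^ 2) + 4 * (β - γ) * x'.1 ^ 2 * x'.2
                - 2 * α * x'.1 * x'.2)) * (x.2 - x'.2)) :
    α = 0 ∧ β + γ = 0 ∧ β = 0 := by
  have hσ2 : 0 < σ ^ 2 := by positivity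
  have hσ4 : 0 < σ ^ 4 := by positivity
  -- B ≥ 0
  have h1 := hmono (1, 1) (0, 1)
  simp only at h1
  have hB1 : 0 ≤ β + γ := by nlinarith
  -- B ≤ 0
  have h2 := hmono (0, σ / 2) (0, -(σ / 2))
  simp only at h2
  have hB2 : β + γ ≤ 0 := by nlinarith
  have hB : β + γ = 0 := le_antisymm hB2 hB1
  -- family: 0 ≤ 2(β-γ)w² - αw
  have h3 : ∀ w : ℝ, 0 ≤ 2 * (β - γ) * w ^ 2 - α * w := by
    intro w
    have h := hmono (w, σ) (w, -σ)
    simp only at h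
    by_contra hc
    push_neg at hc
    nlinarith [mul_pos (neg_pos.mpr hc) hσ2]
  have h3a := h3 1
  have h3b := h3 (-1)
  have hD : 0 ≤ β - γ := by nlinarith
  have hα : α = 0 := by
    have hden : 0 < 8 * (β - γ) + 8 := by linarith
    have h := h3 (α / (8 * (β - γ) + 8))
    have hw : (α / (8 * (β - γ) + 8)) * (8 * (β - γ) + 8) = α := by
      field_simp
    nlinarith [sq_nonneg α, sq_nonneg (α / (8 * (β - γ) + 8)),
      mul_pos hden hden]
  -- now show β - γ ≤ 0 using x=(1,1), x'=(0,2)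
  have h4 := hmono (1, 1) (0, 2)
  simp only at h4
  have hD2 : β - γ ≤ 0 := by nlinarith
  refine ⟨hα, hB, by linarith⟩
end
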